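/- arXiv:1209.1113 — 2 statements merged into one kernel-verified Lean document; each statement's English description precedes it below -/
import Mathlib

section
/- Let a ∈ (0,1), g < 0, α ∈ (0, √(1-a²)/2), and m(ξ) = √(1 - a² - ag|ξ|^{-1}). Suppose F : ℝ × [0,∞) → ℂ satisfies the Fourier bound e^{αt|ξ|}|F̂(ξ,t)| ≤ μ(ξ) for all t ≥ 0, where μ is a fixed finite positive measure. Then the function I⁻(F_x)(t) = ∫₀ᵗ S_-(t-s) ∂_x F(s) ds, where S_-(t) has Fourier multiplier e^{t(iaξ - m(ξ)|ξ|)}, satisfies e^{αt|ξ|}|𝓕(I⁻(F_x))(ξ,t)| ≤ C(α) μ(ξ) for a constant C(α) independent of F. -/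
open MeasureTheory Complex Real

/-- The multiplier `m(ξ) = √(1 - a² - ag/|ξ|)`. -/
noncomputable def mm (a g ξ : ℝ) : ℝ := Real.sqrt (1 - a ^ 2 - a * g / |ξ|)

/-!
On the Fourier side `I⁻(F_x)(ξ, t) = iξ ∫₀ᵗ e^{(t-s)z} F̂(ξ, s) ds` with `Re z = -m(ξ)|ξ|`.
Against the weight `e^{αt|ξ|}` the kernel decays like `e^{-κ(t-s)}` with `κ = (m(ξ) - α)|ξ|`,
and `∫₀ᵗ κ e^{-κ(t-s)} ds ≤ 1`: the derivative loss `|ξ|` is absorbed by the decay, leaving the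
constant `1/(m(ξ) - α) ≤ 1/(√(1-a²) - α)`, since `g < 0` forces `m(ξ) ≥ √(1-a²)`.
-/

theorem integral_mul_exp_neg_mul_sub (κ t : ℝ) :
    ∫ s in (0:ℝ)..t, κ * Real.exp (-(κ * (t - s))) = 1 - Real.exp (-(κ * t)) := by
  have hderiv (s : ℝ) : HasDerivAt (fun s => Real.exp (-(κ * (t - s))))
      (κ * Real.exp (-(κ * (t - s)))) s := by
    have h : HasDerivAt (fun s => -(κ * t) + κ * s) κ s := by
      simpa using ((hasDerivAt_id s).const_mul κ).const_add (-(κ * t))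
    convert h.exp using 1
    · funext s; ring_nf
    · ring_nf
  rw [intervalIntegral.integral_eq_sub_of_hasDerivAt (fun s _ => hderiv s)
    (by apply Continuous.intervalIntegrable; fun_prop)]
  simp

theorem integral_mul_exp_neg_mul_sub_le_one {κ t : ℝ} :
    ∫ s in (0:ℝ)..t, κ * Real.exp (-(κ * (t - s))) ≤ 1 := by
  rw [integral_mul_exp_neg_mul_sub]
  linarith [Real.exp_pos (-(κ * t))]

theorem mul_exp_mul_norm_integral_exp_mul_le {z : ℂ} {ρ M t : ℝ} {F : ℝ → ℂ} (ht : 0 ≤ t)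
    (hF : ∀ s ∈ Set.Icc 0 t, Real.exp (ρ * s) * ‖F s‖ ≤ M) :
    (-z.re - ρ) * (Real.exp (ρ * t) *
      ‖∫ s in (0:ℝ)..t, Complex.exp (((t - s : ℝ) : ℂ) * z) * F s‖) ≤ M := by
  set κ := -z.re - ρ
  have hM : 0 ≤ M := (hF 0 ⟨le_rfl, ht⟩).trans' (by positivity)
  rcases le_or_gt κ 0 with hκ | hκ
  · exact (mul_nonpos_of_nonpos_of_nonneg hκ (by positivity)).trans hM
  have hpointwise : ∀ s ∈ Set.Ioc 0 t, ‖Complex.exp (((t - s : ℝ) : ℂ) * z) * F s‖ ≤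
      M * Real.exp (-(ρ * t)) * Real.exp (-(κ * (t - s))) := by
    intro s ⟨hs0, hst⟩
    have hFs : ‖F s‖ ≤ M * Real.exp (-(ρ * s)) := by
      rw [Real.exp_neg, ← div_eq_mul_inv, le_div_iff₀ (Real.exp_pos _), mul_comm]
      exact hF s ⟨hs0.le, hst⟩
    calc ‖Complex.exp (((t - s : ℝ) : ℂ) * z) * F s‖
        = Real.exp ((t - s) * z.re) * ‖F s‖ := by simp [Complex.norm_exp]
      _ ≤ Real.exp ((t - s) * z.re) * (M * Real.exp (-(ρ * s))) := by gcongr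
      _ = M * Real.exp (-(ρ * t)) * Real.exp (-(κ * (t - s))) := by
        rw [mul_left_comm, mul_assoc, ← Real.exp_add, ← Real.exp_add]
        congr 2
        ring
  have hintegral := intervalIntegral.norm_integral_le_of_norm_le (μ := volume) ht
    (ae_of_all _ hpointwise) (by apply Continuous.intervalIntegrable; fun_prop)
  rw [intervalIntegral.integral_const_mul] at hintegral
  calc κ * (Real.exp (ρ * t) * ‖∫ s in (0:ℝ)..t, Complex.exp (((t - s : ℝ) : ℂ) * z) * F s‖)
      ≤ κ * (Real.exp (ρ * t) *
          (M * Real.exp (-(ρ * t)) * ∫ s in (0:ℝ)..t, Real.exp (-(κ * (t - s))))) := by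
        gcongr
    _ = M * ∫ s in (0:ℝ)..t, κ * Real.exp (-(κ * (t - s))) := by
        rw [intervalIntegral.integral_const_mul, Real.exp_neg]
        field_simp
    _ ≤ M := mul_le_of_le_one_right hM integral_mul_exp_neg_mul_sub_le_one

theorem sqrt_one_sub_sq_le_mm {a g : ℝ} (ha : 0 ≤ a) (hg : g ≤ 0) (ξ : ℝ) :
    √(1 - a ^ 2) ≤ mm a g ξ := by
  have : a * g / |ξ| ≤ 0 :=
    div_nonpos_of_nonpos_of_nonneg (mul_nonpos_of_nonneg_of_nonpos ha hg) (abs_nonneg ξ)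
  exact Real.sqrt_le_sqrt (by linarith)

theorem stmt9_general (a g : ℝ) (ha : 0 < a) (hg : g < 0)
    (α : ℝ) (hα : α < Real.sqrt (1 - a ^ 2) / 2) :
    ∃ C : ℝ, 0 < C ∧
      ∀ (Fhat : ℝ → ℝ → ℂ) (μ : ℝ → ℝ),
        (∀ ξ t : ℝ, 0 ≤ t → Real.exp (α * t * |ξ|) * ‖Fhat ξ t‖ ≤ μ ξ) →
        ∀ ξ t : ℝ, 0 ≤ t →
          Real.exp (α * t * |ξ|) *
              ‖∫ s in (0:ℝ)..t,
                  Complex.exp (((t - s : ℝ) : ℂ) *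
                      (Complex.I * (a : ℂ) * (ξ : ℂ) - ((mm a g ξ : ℝ) : ℂ) * ((|ξ| : ℝ) : ℂ))) *
                    (Complex.I * (ξ : ℂ)) * Fhat ξ s‖ ≤ C * μ ξ := by
  have hgap : 0 < √(1 - a ^ 2) - α := by linarith [Real.sqrt_nonneg (1 - a ^ 2)]
  refine ⟨(√(1 - a ^ 2) - α)⁻¹, inv_pos.2 hgap, fun Fhat μ hF ξ t ht => ?_⟩
  set z : ℂ := Complex.I * a * ξ - ((mm a g ξ : ℝ) : ℂ) * ((|ξ| : ℝ) : ℂ)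
  have hμ : 0 ≤ μ ξ := (hF ξ 0 le_rfl).trans' (by positivity)
  have hm : √(1 - a ^ 2) - α ≤ mm a g ξ - α := by
    linarith [sqrt_one_sub_sq_le_mm ha.le hg.le ξ]
  have hsmoothing := mul_exp_mul_norm_integral_exp_mul_le (z := z) (ρ := α * |ξ|) (M := μ ξ)
    (F := Fhat ξ) ht fun s hs => by simpa [mul_right_comm] using hF ξ s hs.1
  have hre : -z.re - α * |ξ| = (mm a g ξ - α) * |ξ| := by
    simp only [z, sub_re, mul_re, I_re, I_im, ofReal_re, ofReal_im]
    ring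
  have hmultiplier : ∫ s in (0:ℝ)..t, Complex.exp (((t - s : ℝ) : ℂ) * z) * (Complex.I * ξ) *
      Fhat ξ s = Complex.I * ξ * ∫ s in (0:ℝ)..t, Complex.exp (((t - s : ℝ) : ℂ) * z) * Fhat ξ s := by
    rw [← intervalIntegral.integral_const_mul]
    congr 1 with s
    ring
  rw [hmultiplier, norm_mul]
  set J := ‖∫ s in (0:ℝ)..t, Complex.exp (((t - s : ℝ) : ℂ) * z) * Fhat ξ s‖
  have hweighted : (mm a g ξ - α) * (Real.exp (α * t * |ξ|) * (‖Complex.I * ξ‖ * J)) ≤ μ ξ := by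
    convert hsmoothing using 1
    simp only [hre, norm_mul, Complex.norm_I, Complex.norm_real, Real.norm_eq_abs]
    ring_nf
  calc Real.exp (α * t * |ξ|) * (‖Complex.I * ξ‖ * J)
      ≤ μ ξ / (mm a g ξ - α) := by
        rw [le_div_iff₀ (hgap.trans_le hm), mul_comm]
        exact hweighted
    _ ≤ μ ξ / (√(1 - a ^ 2) - α) := div_le_div_of_nonneg_left hμ hgap hm
    _ = (√(1 - a ^ 2) - α)⁻¹ * μ ξ := div_eq_inv_mul _ _

/-- Linear estimate for `I⁻(F_x)`: for `a ∈ (0,1)`, `g < 0`, `0 < α < √(1-a²)/2`, there is a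
constant `C(α)` (independent of `F`) such that whenever `e^{αt|ξ|}|F̂(ξ,t)| ≤ μ(ξ)` for all
`t ≥ 0` (with `μ` a fixed nonnegative bound), the Fourier transform of
`I⁻(F_x)(t) = ∫₀ᵗ S₋(t-s) ∂ₓF(s) ds` (where `S₋(t)` has multiplier `e^{t(iaξ - m(ξ)|ξ|)}` and
`∂ₓ` has multiplier `iξ`) satisfies `e^{αt|ξ|}|𝓕(I⁻(F_x))(ξ,t)| ≤ C(α) μ(ξ)`. -/
theorem stmt9 (a g : ℝ) (ha : 0 < a) (ha1 : a < 1) (hg : g < 0)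
    (α : ℝ) (hα0 : 0 < α) (hα : α < Real.sqrt (1 - a ^ 2) / 2) :
    ∃ C : ℝ, 0 < C ∧
      ∀ (Fhat : ℝ → ℝ → ℂ) (μ : ℝ → ℝ),
        (∀ ξ t : ℝ, 0 ≤ t → Real.exp (α * t * |ξ|) * ‖Fhat ξ t‖ ≤ μ ξ) →
        ∀ ξ t : ℝ, 0 ≤ t →
          Real.exp (α * t * |ξ|) *
              ‖∫ s in (0:ℝ)..t,
                  Complex.exp (((t - s : ℝ) : ℂ) *
                      (Complex.I * (a : ℂ) * (ξ : ℂ) - ((mm a g ξ : ℝ) : ℂ) * ((|ξ| : ℝ) : ℂ))) *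
                    (Complex.I * (ξ : ℂ)) * Fhat ξ s‖ ≤ C * μ ξ :=
  stmt9_general a g ha hg α hα
end

section
/- Suppose u(·,t) satisfies e^{αt|ξ|}|û(ξ,t)| ≤ μ(ξ) for all t ≥ 0 with α > 0 and μ a finite positive measure with μ({0}) = 0. Then ‖u(·,t)‖_{L^∞(ℝ)} → 0 as t → ∞. -/
open MeasureTheory Complex Real Filter Topology

/-! Since `|e^{ixξ}| = 1`, `‖u(·,t)‖_∞` is at most `∫ e^{-αt|ξ|} dμ(ξ)`. As `t → ∞` the integrand
tends to `0` off `ξ = 0`, a `μ`-null set, and is bounded by `1`, which is `μ`-integrable because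
`μ` is finite; dominated convergence finishes the proof. -/

lemma norm_exp_neg_mul_abs_le_one {c : ℝ} (hc : 0 ≤ c) (ξ : ℝ) :
    ‖Real.exp (-(c * |ξ|))‖ ≤ 1 := by
  rw [Real.norm_of_nonneg (Real.exp_nonneg _), Real.exp_le_one_iff, neg_nonpos]
  positivity

lemma integrable_exp_neg_mul_abs (μ : Measure ℝ) [IsFiniteMeasure μ] {c : ℝ} (hc : 0 ≤ c) :
    Integrable (fun ξ => Real.exp (-(c * |ξ|))) μ :=
  (integrable_const (1 : ℝ)).mono' (by fun_prop) <|
    ae_of_all _ (norm_exp_neg_mul_abs_le_one hc)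

lemma tendsto_integral_exp_neg_mul_abs (μ : Measure ℝ) [IsFiniteMeasure μ] (hμ0 : μ {0} = 0) :
    Tendsto (fun c : ℝ => ∫ ξ, Real.exp (-(c * |ξ|)) ∂μ) atTop (𝓝 0) := by
  have hae : ∀ᵐ ξ ∂μ, ξ ≠ 0 := measure_eq_zero_iff_ae_notMem.mp hμ0
  have hlim : ∀ᵐ ξ ∂μ, Tendsto (fun c : ℝ => Real.exp (-(c * |ξ|))) atTop (𝓝 0) := by
    filter_upwards [hae] with ξ hξ
    exact Real.tendsto_exp_atBot.comp <| tendsto_neg_atTop_atBot.comp <|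
      tendsto_id.atTop_mul_const (abs_pos.mpr hξ)
  simpa using tendsto_integral_filter_of_dominated_convergence (fun _ => (1 : ℝ))
    (Eventually.of_forall fun _ => by fun_prop)
    ((eventually_ge_atTop 0).mono fun c hc => ae_of_all _ (norm_exp_neg_mul_abs_le_one hc))
    (integrable_const 1) hlim

lemma norm_integral_mul_exp_I_mul_le {μ : Measure ℝ} {g : ℝ → ℂ} {b : ℝ → ℝ}
    (hb : Integrable b μ) (hgb : ∀ ξ, ‖g ξ‖ ≤ b ξ) (x : ℝ) :
    ‖∫ ξ, g ξ * Complex.exp (Complex.I * x * ξ) ∂μ‖ ≤ ∫ ξ, b ξ ∂μ := by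
  refine norm_integral_le_of_norm_le hb (ae_of_all _ fun ξ => ?_)
  simpa [Complex.norm_exp] using hgb ξ

/-- If `û(·,t)` is dominated by `e^{-αt|ξ|}μ` with `α > 0` and `μ` a finite positive measure with
no atom at `0` (i.e. `u(x,t) = ∫ g(ξ,t)e^{ixξ} dμ(ξ)` with `|g(ξ,t)| ≤ e^{-αt|ξ|}`), then
`‖u(·,t)‖_{L^∞}` tends to `0` as `t → ∞`. -/
theorem stmt18 (α : ℝ) (hα : 0 < α) (μ : Measure ℝ) [IsFiniteMeasure μ] (hμ0 : μ {0} = 0)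
    (u : ℝ → ℝ → ℂ) (gd : ℝ → ℝ → ℂ)
    (hrep : ∀ t : ℝ, 0 ≤ t → ∀ x : ℝ,
      u x t = ∫ ξ : ℝ, gd ξ t * Complex.exp (Complex.I * x * ξ) ∂μ)
    (hbd : ∀ ξ t : ℝ, 0 ≤ t → ‖gd ξ t‖ ≤ Real.exp (-(α * t * |ξ|))) :
    ∀ ε > 0, ∃ T : ℝ, ∀ t ≥ T, ∀ x : ℝ, ‖u x t‖ ≤ ε := by
  intro ε hε
  have hdecay : Tendsto (fun t : ℝ => ∫ ξ, Real.exp (-(α * t * |ξ|)) ∂μ) atTop (𝓝 0) :=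
    (tendsto_integral_exp_neg_mul_abs μ hμ0).comp (tendsto_id.const_mul_atTop hα)
  obtain ⟨T, hT⟩ :=
    ((hdecay.eventually_le_const hε).and (eventually_ge_atTop 0)).exists_forall_of_atTop
  refine ⟨T, fun t ht x => ?_⟩
  obtain ⟨hsmall, ht0⟩ := hT t ht
  rw [hrep t ht0 x]
  exact (norm_integral_mul_exp_I_mul_le
    (integrable_exp_neg_mul_abs μ (by positivity)) (fun ξ => hbd ξ t ht0) x).trans hsmall
end
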